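/- arXiv:2503.14235 — 3 statements merged into one kernel-verified Lean document; each statement's English description precedes it below -/
import Mathlib

section
/- If f : X → Y is a light map between compact metrizable spaces and A ⊆ Y is countable-dimensional, then f⁻¹(A) is countable-dimensional. -/
open Set

/-- A topological space is zero-dimensional (small inductive dimension ≤ 0):
every point has arbitrarily small clopen neighborhoods. -/
def ZeroDimSpace (X : Type*) [TopologicalSpace X] : Prop :=
  ∀ (x : X) (U : Set X), IsOpen U → x ∈ U → ∃ V : Set X, IsClopen V ∧ x ∈ V ∧ V ⊆ U

/-- A subset of a space is countable-dimensional if it is a countable union of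
zero-dimensional subsets. -/
def CountableDimensional {X : Type*} [TopologicalSpace X] (s : Set X) : Prop :=
  ∃ A : ℕ → Set X, (⋃ n, A n) = s ∧ ∀ n, ZeroDimSpace (A n)

/-- The preimage of a zero-dimensional set under a light map between compact
metric spaces is zero-dimensional. -/
lemma zeroDim_preimage_of_light {X Y : Type*} [MetricSpace X] [CompactSpace X]
    [MetricSpace Y] [CompactSpace Y]
    (f : X → Y) (hf : Continuous f)
    (hlight : ∀ y : Y, IsTotallyDisconnected (f ⁻¹' {y}))
    (B : Set Y) (hB : ZeroDimSpace B) : ZeroDimSpace (f ⁻¹' B) := by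
  intro z U hU hzU
  rw [isOpen_induced_iff] at hU
  obtain ⟨U', hU'o, rfl⟩ := hU
  set x : X := z.1 with hxdef
  have hy : f x ∈ B := z.2
  set y : Y := f x with hydef
  set F : Set X := f ⁻¹' {y} with hFdef
  have hFcl : IsClosed F := isClosed_singleton.preimage hf
  haveI : CompactSpace F := isCompact_iff_compactSpace.mp hFcl.isCompact
  haveI : TotallyDisconnectedSpace F := totallyDisconnectedSpace_subtype_iff.mpr (hlight y)
  have hxF : x ∈ F := rfl
  obtain ⟨V, hVclopen, hxV, hVU⟩ :=
    compact_exists_isClopen_in_isOpen (U := (Subtype.val ⁻¹' U' : Set F))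
      (x := ⟨x, hxF⟩) (hU'o.preimage continuous_subtype_val) hzU
  -- C and F \ C as compact subsets of X
  set C : Set X := Subtype.val '' V with hCdef
  set C' : Set X := Subtype.val '' (Vᶜ : Set F) with hC'def
  have hCcomp : IsCompact C :=
    (hVclopen.1.isCompact).image continuous_subtype_val
  have hC'comp : IsCompact C' :=
    (hVclopen.2.isClosed_compl.isCompact).image continuous_subtype_val
  have hdisj : Disjoint C C' := by
    rw [disjoint_left]
    rintro a ⟨p, hpV, rfl⟩ ⟨q, hqV, hq⟩
    exact hqV (by rw [show q = p from Subtype.ext hq]; exact hpV)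
  obtain ⟨V₁, W, hV₁o, hWo, hCV₁, hC'W, hV₁W⟩ :=
    SeparatedNhds.of_isCompact_isCompact hCcomp hC'comp hdisj
  -- shrink V₁ inside U'
  set V₂ : Set X := V₁ ∩ U' with hV₂def
  have hV₂o : IsOpen V₂ := hV₁o.inter hU'o
  have hCV₂ : C ⊆ V₂ := fun a ha => ⟨hCV₁ ha, by
    obtain ⟨p, hpV, rfl⟩ := ha; exact hVU hpV⟩
  have hV₂W : Disjoint V₂ W := hV₁W.mono_left inter_subset_left
  have hFVW : F ⊆ V₂ ∪ W := by
    intro a ha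
    by_cases h : (⟨a, ha⟩ : F) ∈ V
    · exact Or.inl (hCV₂ ⟨⟨a, ha⟩, h, rfl⟩)
    · exact Or.inr (hC'W ⟨⟨a, ha⟩, h, rfl⟩)
  -- closed map tube
  have hclosed : IsClosedMap f := hf.isClosedMap
  set O : Set Y := (f '' (V₂ ∪ W)ᶜ)ᶜ with hOdef
  have hOopen : IsOpen O :=
    (hclosed _ ((hV₂o.union hWo).isClosed_compl)).isOpen_compl
  have hyO : y ∈ O := by
    rintro ⟨a, hac, hay⟩
    exact hac (hFVW (by simpa [hFdef] using hay))
  have hpre : f ⁻¹' O ⊆ V₂ ∪ W := by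
    intro a ha
    by_contra h
    exact ha ⟨a, h, rfl⟩
  -- zero-dimensionality of B
  obtain ⟨D, hDclopen, hyD, hDO⟩ :=
    hB ⟨y, hy⟩ (Subtype.val ⁻¹' O) (hOopen.preimage continuous_subtype_val) hyO
  -- the map g : f⁻¹(B) → B
  set g : (f ⁻¹' B : Set X) → B := fun p => ⟨f p.1, p.2⟩ with hgdef
  have hg : Continuous g := Continuous.subtype_mk (hf.comp continuous_subtype_val) _
  refine ⟨g ⁻¹' D ∩ Subtype.val ⁻¹' V₂, ⟨?_, ?_⟩, ⟨hyD, ?_⟩, ?_⟩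
  · -- closed
    have heq : g ⁻¹' D ∩ Subtype.val ⁻¹' V₂ = g ⁻¹' D ∩ Subtype.val ⁻¹' Wᶜ := by
      ext p
      constructor
      · rintro ⟨hpD, hpV⟩
        exact ⟨hpD, fun hpW => hV₂W.le_bot ⟨hpV, hpW⟩⟩
      · rintro ⟨hpD, hpW⟩
        refine ⟨hpD, ?_⟩
        have : p.1 ∈ V₂ ∪ W := hpre (hDO hpD)
        exact this.resolve_right hpW
    rw [heq]
    exact (hDclopen.1.preimage hg).inter
      (hWo.isClosed_compl.preimage continuous_subtype_val)
  · exact (hDclopen.2.preimage hg).inter (hV₂o.preimage continuous_subtype_val)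
  · exact hCV₂ ⟨⟨x, hxF⟩, hxV, rfl⟩
  · exact fun p hp => hp.2.2

/-- If `f : X → Y` is a light map between compact metrizable spaces
and `A ⊆ Y` is countable-dimensional, then `f ⁻¹' A` is countable-dimensional. -/
theorem stmt_1 {X Y : Type*} [MetricSpace X] [CompactSpace X]
    [MetricSpace Y] [CompactSpace Y]
    (f : X → Y) (hf : Continuous f)
    (hlight : ∀ y : Y, IsTotallyDisconnected (f ⁻¹' {y}))
    (A : Set Y) (hA : CountableDimensional A) :
    CountableDimensional (f ⁻¹' A) := by
  obtain ⟨B, hBU, hBzd⟩ := hA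
  refine ⟨fun n => f ⁻¹' (B n), ?_, fun n =>
    zeroDim_preimage_of_light f hf hlight (B n) (hBzd n)⟩
  rw [← preimage_iUnion, hBU]
end

section
/- Holsztyński's theorem: if T₁, …, Tₙ are (metrizable) continua and uᵢ : Tᵢ → [0,1] are continuous surjections for i = 1,…,n, then the product map u₁ × ⋯ × uₙ : T₁ × ⋯ × Tₙ → [0,1]ⁿ is essential, i.e., every continuous map g : T₁ × ⋯ × Tₙ → [0,1]ⁿ that agrees with u₁ × ⋯ × uₙ on the preimage of the boundary ∂[0,1]ⁿ is surjective. -/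
/-!
Points with a coordinate equal to `1` are hit because `g` agrees there with the surjective product
map, and the range of `g` is compact, so it suffices to approximate every other point `y` of the
cube. Joining a preimage of `0` to a preimage of `1` by an `ε`-chain in each continuum `Tᵢ` gives a
grid map `Φ : ∏ᵢ [0, Mᵢ] → ∏ᵢ Tᵢ`, and `g ∘ Φ` has the boundary behaviour of the identity of the
cube. Label a grid point `p` by the first `i` with `yᵢ < g (Φ p) i`, or by `n` if there is none.
Sperner's lemma for Kuhn's triangulation of the grid, proved by the door-counting parity argument
and induction on the dimension, yields a fully labelled simplex; by uniform continuity the images of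
its vertices all lie within `η` of `y`.
-/

open Set Function

/-- The geometric boundary of the cube `[0,1]ⁿ`: points with some coordinate 0 or 1. -/
def cubeBoundary (n : ℕ) : Set (Fin n → unitInterval) :=
  {p | ∃ i, p i = 0 ∨ p i = 1}

theorem Finset.even_card_of_involutive {α : Type*} {s : Finset α} (f : α → α)
    (hmaps : ∀ a ∈ s, f a ∈ s) (hinv : ∀ a ∈ s, f (f a) = a) (hne : ∀ a ∈ s, f a ≠ a) :
    Even s.card := by
  classical
  let g : Function.End s := fun a => ⟨f a, hmaps a a.2⟩
  have hg : g ^ 2 ^ 1 = 1 := funext fun a => Subtype.ext (hinv a a.2)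
  have := Equiv.Perm.card_fixedPoints_modEq (p := 2) (f := g) hg
  have hfix : Fintype.card (Function.fixedPoints g) = 0 :=
    Fintype.card_eq_zero_iff.mpr ⟨fun a => hne a.1 a.1.2 (congrArg Subtype.val a.2)⟩
  rw [hfix, Fintype.card_coe] at this
  exact Nat.even_iff.mpr this

lemma finRotate_trans_apply_last {α : Type*} {N : ℕ} (π : Fin (N + 1) ≃ α) :
    ((finRotate _).trans π) (Fin.last N) = π 0 := by
  simp

lemma finRotate_symm_trans_apply_zero {α : Type*} {N : ℕ} (π : Fin (N + 1) ≃ α) :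
    ((finRotate _).symm.trans π) 0 = π (Fin.last N) := by
  rw [Equiv.trans_apply, (finRotate _).symm_apply_eq.mpr finRotate_last.symm]

theorem exists_chain_dist_lt {X : Type*} [PseudoMetricSpace X] [PreconnectedSpace X]
    (a b : X) {ε : ℝ} (hε : 0 < ε) :
    ∃ (M : ℕ) (c : ℕ → X), c 0 = a ∧ c M = b ∧ ∀ k < M, dist (c k) (c (k + 1)) < ε := by
  have hab : Relation.ReflTransGen (fun x y => dist x y < ε) a b := by
    refine PreconnectedSpace.induction₂' _ (fun x => ?_) ⟨fun _ _ _ => .trans⟩ a b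
    filter_upwards [Metric.ball_mem_nhds x hε] with y hy
    exact ⟨.single (by rwa [dist_comm]), .single hy⟩
  induction hab with
  | refl => exact ⟨0, fun _ => a, rfl, rfl, by simp⟩
  | @tail y z _ hyz ih =>
    obtain ⟨M, c, hc0, hcM, hstep⟩ := ih
    refine ⟨M + 1, fun k => if k ≤ M then c k else z, by simp [hc0], by simp, fun k hk => ?_⟩
    rcases Nat.lt_or_ge k M with hkM | hkM
    · simpa [hkM.le, Nat.succ_le_of_lt hkM] using hstep k hkM
    · obtain rfl : k = M := by omega
      simpa [hcM] using hyz

open scoped Classical in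
/-- The least `i` with `P i`, or `n` if there is none. -/
noncomputable def firstIndex {n : ℕ} (P : Fin n → Prop) : ℕ :=
  Nat.find (⟨n, Or.inl le_rfl⟩ : ∃ k, n ≤ k ∨ ∃ i : Fin n, (i : ℕ) = k ∧ P i)

section FirstIndex

variable {n : ℕ} {P : Fin n → Prop}

lemma firstIndex_le : firstIndex P ≤ n := by
  classical
  exact Nat.find_min' _ (Or.inl le_rfl)

lemma firstIndex_le_of {i : Fin n} (h : P i) : firstIndex P ≤ i := by
  classical
  exact Nat.find_min' _ (Or.inr ⟨i, rfl, h⟩)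

lemma of_firstIndex_eq {i : Fin n} (h : firstIndex P = i) : P i := by
  classical
  rcases Nat.find_spec (⟨n, Or.inl le_rfl⟩ : ∃ k, n ≤ k ∨ ∃ i : Fin n, (i : ℕ) = k ∧ P i) with
    hn | ⟨i', hi', hP⟩
  · exact absurd (h ▸ hn) (not_le.mpr i.2)
  · convert hP
    exact Fin.ext (hi'.trans h).symm

end FirstIndex

section OmittableLabels

variable {N : ℕ}

open scoped Classical in
noncomputable def omittable (L : Fin (N + 1) → ℕ) : Finset (Fin (N + 1)) :=
  Finset.univ.filter fun k => ∀ v < N, ∃ j ≠ k, L j = v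

variable {L : Fin (N + 1) → ℕ}

lemma mem_omittable {k : Fin (N + 1)} : k ∈ omittable L ↔ ∀ v < N, ∃ j ≠ k, L j = v := by
  simp [omittable]

lemma card_omittable_of_covers (hL : ∀ j, L j ≤ N) (hcov : ∀ v ≤ N, ∃ j, L j = v) :
    (omittable L).card = 1 := by
  have hsurj : Surjective fun j => (⟨L j, Nat.lt_succ_of_le (hL j)⟩ : Fin (N + 1)) :=
    fun v => (hcov v (Nat.le_of_lt_succ v.2)).imp fun _ hj => Fin.ext hj
  have hinj : Injective L := fun a b h => Finite.injective_iff_surjective.mpr hsurj (Fin.ext h)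
  obtain ⟨k₀, hk₀⟩ := hcov N le_rfl
  refine Finset.card_eq_one.mpr ⟨k₀, Finset.ext fun k => ?_⟩
  rw [mem_omittable, Finset.mem_singleton]
  constructor
  · intro h
    by_contra hne
    have hk : L k < N := (hL k).lt_of_ne fun h' => hne (hinj (h'.trans hk₀.symm))
    obtain ⟨j, hjk, hj⟩ := h (L k) hk
    exact hjk (hinj hj)
  · rintro rfl v hv
    obtain ⟨j, hj⟩ := hcov v hv.le
    exact ⟨j, by rintro rfl; omega, hj⟩

/-- Exactly one value is taken twice, and the omittable indices are the two indices carrying it. -/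
lemma card_omittable_of_lt (hL : ∀ j, L j < N) (k₁ : Fin (N + 1)) (hk₁ : k₁ ∈ omittable L) :
    (omittable L).card = 2 := by
  have hinjOn : ∀ k ∈ omittable L, Set.InjOn L {k}ᶜ := by
    intro k hk a ha b hb hab
    refine Finset.inj_on_of_surj_on_of_card_le (s := Finset.univ.erase k) (t := Finset.range N)
      (fun j _ => L j) (fun j _ => Finset.mem_range.mpr (hL j)) (fun v hv => ?_) (by simp)
      (Finset.mem_erase.mpr ⟨ha, Finset.mem_univ a⟩) (Finset.mem_erase.mpr ⟨hb, Finset.mem_univ b⟩)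
      hab
    obtain ⟨j, hjk, hj⟩ := mem_omittable.mp hk v (Finset.mem_range.mp hv)
    exact ⟨j, Finset.mem_erase.mpr ⟨hjk, Finset.mem_univ j⟩, hj⟩
  obtain ⟨k₂, hk₂₁, hk₂⟩ := mem_omittable.mp hk₁ (L k₁) (hL k₁)
  have hk₂mem : k₂ ∈ omittable L := by
    refine mem_omittable.mpr fun v hv => ?_
    obtain ⟨j, hjk₁, hj⟩ := mem_omittable.mp hk₁ v hv
    rcases eq_or_ne j k₂ with rfl | hjk₂
    · exact ⟨k₁, hk₂₁.symm, hk₂ ▸ hj⟩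
    · exact ⟨j, hjk₂, hj⟩
  refine Finset.card_eq_two.mpr ⟨k₁, k₂, hk₂₁.symm, Finset.ext fun k => ⟨fun hk => ?_, ?_⟩⟩
  · by_contra hne
    simp only [Finset.mem_insert, Finset.mem_singleton, not_or] at hne
    exact hk₂₁ (hinjOn k hk (Ne.symm hne.2) (Ne.symm hne.1) hk₂)
  · simp only [Finset.mem_insert, Finset.mem_singleton]
    rintro (rfl | rfl) <;> assumption

lemma even_card_omittable (hL : ∀ j, L j ≤ N) (hcov : ¬ ∀ v ≤ N, ∃ j, L j = v) :
    Even (omittable L).card := by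
  push Not at hcov
  obtain ⟨v₀, hv₀, hmiss⟩ := hcov
  rcases (omittable L).eq_empty_or_nonempty with he | ⟨k₁, hk₁⟩
  · simp [he]
  rcases hv₀.lt_or_eq with hlt | rfl
  · obtain ⟨j, -, hj⟩ := mem_omittable.mp hk₁ v₀ hlt
    exact absurd hj (hmiss j)
  · rw [card_omittable_of_lt (fun j => (hL j).lt_of_ne (hmiss j)) k₁ hk₁]
    exact even_two

theorem card_omittable_mod_two (hL : ∀ j, L j ≤ N) :
    (omittable L).card % 2 = if ∀ v ≤ N, ∃ j, L j = v then 1 else 0 := by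
  split_ifs with hcov
  · rw [card_omittable_of_covers hL hcov]
  · exact Nat.even_iff.mp (even_card_omittable hL hcov)

end OmittableLabels

/-- A simplex of Kuhn's triangulation of the box `∏ i, [0, m i]`, given by the cell `x` containing
it and the order `π` in which its edge path `x = v₀, v₁, …, vₙ` increases the coordinates. -/
abbrev KuhnSimplex {n : ℕ} (m : Fin n → ℕ) := (∀ i, Fin (m i)) × Equiv.Perm (Fin n)

namespace KuhnSimplex

section Doors

variable {n : ℕ} {m : Fin n → ℕ}

def vertex (s : KuhnSimplex m) (j : Fin (n + 1)) : Fin n → ℕ :=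
  fun i => s.1 i + if (s.2.symm i : ℕ) < j then 1 else 0

def IsFullyLabelled (ℓ : (Fin n → ℕ) → ℕ) (s : KuhnSimplex m) : Prop :=
  ∀ v ≤ n, ∃ j, ℓ (s.vertex j) = v

def IsDoor (ℓ : (Fin n → ℕ) → ℕ) (s : KuhnSimplex m) (k : Fin (n + 1)) : Prop :=
  ∀ v < n, ∃ j ≠ k, ℓ (s.vertex j) = v

open scoped Classical in
noncomputable def fullyLabelled (m : Fin n → ℕ) (ℓ : (Fin n → ℕ) → ℕ) : Finset (KuhnSimplex m) :=
  Finset.univ.filter (IsFullyLabelled ℓ)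

open scoped Classical in
noncomputable def doors (m : Fin n → ℕ) (ℓ : (Fin n → ℕ) → ℕ) :
    Finset (KuhnSimplex m × Fin (n + 1)) :=
  Finset.univ.filter fun e => IsDoor ℓ e.1 e.2

variable {ℓ : (Fin n → ℕ) → ℕ}

lemma mem_fullyLabelled {s : KuhnSimplex m} : s ∈ fullyLabelled m ℓ ↔ IsFullyLabelled ℓ s := by
  simp [fullyLabelled]

lemma mem_doors {e : KuhnSimplex m × Fin (n + 1)} : e ∈ doors m ℓ ↔ IsDoor ℓ e.1 e.2 := by
  simp [doors]

theorem card_doors_mod_two (hℓ : ∀ p, ℓ p ≤ n) :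
    (doors m ℓ).card % 2 = (fullyLabelled m ℓ).card % 2 := by
  classical
  have hfiber (s : KuhnSimplex m) :
      (∑ k : Fin (n + 1), if IsDoor ℓ s k then 1 else 0) % 2 =
        if IsFullyLabelled ℓ s then 1 else 0 := by
    have hdoors : Finset.univ.filter (IsDoor ℓ s) = omittable fun j => ℓ (s.vertex j) := by
      ext k
      rw [Finset.mem_filter, mem_omittable]
      simp [IsDoor]
    rw [← Finset.card_filter, hdoors, card_omittable_mod_two fun j => hℓ _]
    exact if_congr Iff.rfl rfl rfl
  rw [doors, fullyLabelled, Finset.card_filter, Finset.card_filter, Fintype.sum_prod_type,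
    Finset.sum_nat_mod, Finset.sum_congr rfl fun s _ => hfiber s]

end Doors

section RaiseLower

variable {n : ℕ} {m : Fin n → ℕ}

/-- `x + e_b`, kept inside the grid by truncation. -/
def raise (x : ∀ i, Fin (m i)) (b : Fin n) : ∀ i, Fin (m i) :=
  update x b ⟨min (x b + 1) (m b - 1), by have := (x b).2; omega⟩

/-- `x - e_b`, with truncated subtraction. -/
def lower (x : ∀ i, Fin (m i)) (b : Fin n) : ∀ i, Fin (m i) :=
  update x b ⟨x b - 1, by have := (x b).2; omega⟩

lemma lower_raise (x : ∀ i, Fin (m i)) (b : Fin n) (hb : (x b : ℕ) + 1 < m b) :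
    lower (raise x b) b = x := by
  funext i
  rcases eq_or_ne i b with rfl | hi
  · simp only [lower, raise, update_self]
    ext
    simp only
    omega
  · simp only [lower, raise, update_of_ne hi]

lemma raise_lower (x : ∀ i, Fin (m i)) (b : Fin n) (hb : (x b : ℕ) ≠ 0) :
    raise (lower x b) b = x := by
  funext i
  rcases eq_or_ne i b with rfl | hi
  · simp only [lower, raise, update_self]
    ext
    simp only
    have := (x i).2
    omega
  · simp only [lower, raise, update_of_ne hi]

end RaiseLower

section Pivot

variable {N : ℕ} {m : Fin (N + 1) → ℕ}

/-- For `0 < k < N + 1`, the transposition of the positions `k - 1` and `k` of the edge path. -/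
def adjSwap (k : Fin (N + 2)) : Equiv.Perm (Fin (N + 1)) :=
  Equiv.swap ⟨k - 1, by omega⟩ ⟨min k N, by omega⟩

lemma vertex_raise (x : ∀ i, Fin (m i)) (π : Equiv.Perm (Fin (N + 1)))
    (hb : (x (π 0) : ℕ) + 1 < m (π 0)) {j : Fin (N + 2)} (hj : j ≠ Fin.last (N + 1)) :
    vertex (raise x (π 0), (finRotate _).trans π) j = vertex (x, π) (j + 1) := by
  funext i
  have hj1 : ((j + 1 : Fin (N + 2)) : ℕ) = j + 1 := by rw [Fin.val_add_one, if_neg hj]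
  have hjN : (j : ℕ) < N + 1 := Fin.val_lt_last hj
  simp only [vertex, Equiv.symm_trans_apply, finRotate_symm_apply, Fin.coe_sub_one, hj1]
  rcases eq_or_ne i (π 0) with rfl | hi
  · simp only [raise, update_self, Equiv.symm_apply_apply, if_true, Fin.val_zero]
    split_ifs <;> omega
  · have hr : π.symm i ≠ 0 := fun h => hi (by rw [← h, Equiv.apply_symm_apply])
    have hr' : (π.symm i : ℕ) ≠ 0 := fun h => hr (Fin.ext h)
    simp only [raise, update_of_ne hi, if_neg hr]
    split_ifs <;> omega

lemma vertex_lower (x : ∀ i, Fin (m i)) (π : Equiv.Perm (Fin (N + 1)))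
    (hb : (x (π (Fin.last N)) : ℕ) ≠ 0) {j : Fin (N + 2)} (hj : j ≠ 0) :
    vertex (lower x (π (Fin.last N)), (finRotate _).symm.trans π) j = vertex (x, π) (j - 1) := by
  funext i
  have hj1 : ((j - 1 : Fin (N + 2)) : ℕ) = j - 1 := by rw [Fin.coe_sub_one, if_neg hj]
  have hj0 : (j : ℕ) ≠ 0 := fun h => hj (Fin.ext h)
  have hjN := j.2
  simp only [vertex, Equiv.symm_trans_apply, Equiv.symm_symm, coe_finRotate, hj1]
  rcases eq_or_ne i (π (Fin.last N)) with rfl | hi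
  · simp only [lower, update_self, Equiv.symm_apply_apply, if_true, Fin.val_last]
    split_ifs <;> omega
  · have hr : π.symm i ≠ Fin.last N := fun h => hi (by rw [← h, Equiv.apply_symm_apply])
    simp only [lower, update_of_ne hi, if_neg hr]
    split_ifs <;> omega

lemma vertex_adjSwap (x : ∀ i, Fin (m i)) (π : Equiv.Perm (Fin (N + 1))) {k : Fin (N + 2)}
    (hk0 : k ≠ 0) (hkl : k ≠ Fin.last (N + 1)) {j : Fin (N + 2)} (hj : j ≠ k) :
    vertex (x, (adjSwap k).trans π) j = vertex (x, π) j := by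
  funext i
  have hk0' : (k : ℕ) ≠ 0 := fun h => hk0 (Fin.ext h)
  have hkl' : (k : ℕ) < N + 1 := Fin.val_lt_last hkl
  have hjk : (j : ℕ) ≠ k := fun h => hj (Fin.ext h)
  have key : ((adjSwap k (π.symm i) : Fin (N + 1)) : ℕ) < j ↔ (π.symm i : ℕ) < j := by
    simp only [adjSwap, Equiv.swap_apply_def]
    split_ifs with h₁ h₂
    · simp only [h₁, Fin.val_mk]; omega
    · simp only [h₂, Fin.val_mk]; omega
    · rfl
  simp only [vertex, Equiv.symm_trans_apply, Equiv.symm_swap, adjSwap] at key ⊢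
  simp only [key]

/-- The simplex sharing with `e.1` its facet opposite vertex `e.2`, and the index of its own vertex
opposite that facet. -/
def pivot (e : KuhnSimplex m × Fin (N + 2)) : KuhnSimplex m × Fin (N + 2) :=
  if e.2 = 0 then ((raise e.1.1 (e.1.2 0), (finRotate _).trans e.1.2), Fin.last _)
  else if e.2 = Fin.last (N + 1) then
    ((lower e.1.1 (e.1.2 (Fin.last N)), (finRotate _).symm.trans e.1.2), 0)
  else ((e.1.1, (adjSwap e.2).trans e.1.2), e.2)

/-- The facet of `e.1` opposite vertex `e.2` lies in the face `p (π 0) = m (π 0)` or in the face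
`p (π N) = 0` of the box; all other facets are shared by two simplices. -/
def IsBoundaryFacet (e : KuhnSimplex m × Fin (N + 2)) : Prop :=
  (e.2 = 0 ∧ (e.1.1 (e.1.2 0) : ℕ) + 1 = m (e.1.2 0)) ∨
    (e.2 = Fin.last (N + 1) ∧ (e.1.1 (e.1.2 (Fin.last N)) : ℕ) = 0)

instance : DecidablePred (IsBoundaryFacet (m := m)) :=
  fun _ => inferInstanceAs (Decidable (_ ∨ _))

lemma pivot_zero (x : ∀ i, Fin (m i)) (π : Equiv.Perm (Fin (N + 1))) :
    pivot ((x, π), 0) = ((raise x (π 0), (finRotate _).trans π), Fin.last _) :=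
  if_pos rfl

lemma pivot_last (x : ∀ i, Fin (m i)) (π : Equiv.Perm (Fin (N + 1))) :
    pivot ((x, π), Fin.last _) = ((lower x (π (Fin.last N)), (finRotate _).symm.trans π), 0) := by
  rw [pivot, if_neg Fin.last_pos.ne', if_pos rfl]

lemma pivot_of_ne (x : ∀ i, Fin (m i)) (π : Equiv.Perm (Fin (N + 1))) {k : Fin (N + 2)}
    (hk0 : k ≠ 0) (hkl : k ≠ Fin.last (N + 1)) :
    pivot ((x, π), k) = ((x, (adjSwap k).trans π), k) := by
  rw [pivot, if_neg hk0, if_neg hkl]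

lemma lt_of_not_isBoundaryFacet_zero {x : ∀ i, Fin (m i)} {π : Equiv.Perm (Fin (N + 1))}
    (h : ¬ IsBoundaryFacet ((x, π), 0)) : (x (π 0) : ℕ) + 1 < m (π 0) :=
  Nat.lt_of_le_of_ne (x (π 0)).2 fun h' => h (Or.inl ⟨rfl, h'⟩)

lemma ne_zero_of_not_isBoundaryFacet_last {x : ∀ i, Fin (m i)} {π : Equiv.Perm (Fin (N + 1))}
    (h : ¬ IsBoundaryFacet ((x, π), Fin.last _)) : (x (π (Fin.last N)) : ℕ) ≠ 0 :=
  fun h' => h (Or.inr ⟨rfl, h'⟩)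

variable {ℓ : (Fin (N + 1) → ℕ) → ℕ}

lemma isDoor_pivot {e : KuhnSimplex m × Fin (N + 2)} (he : IsDoor ℓ e.1 e.2)
    (hnb : ¬ IsBoundaryFacet e) : IsDoor ℓ (pivot e).1 (pivot e).2 := by
  obtain ⟨⟨x, π⟩, k⟩ := e
  intro v hv
  obtain ⟨j, hjk, hj⟩ := he v hv
  by_cases hk0 : k = 0
  · subst hk0
    have hj' : j - 1 ≠ Fin.last (N + 1) := fun h =>
      hjk (by rw [sub_eq_iff_eq_add.mp h, Fin.last_add_one])
    rw [pivot_zero]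
    refine ⟨j - 1, hj', ?_⟩
    rwa [vertex_raise x π (lt_of_not_isBoundaryFacet_zero hnb) hj', sub_add_cancel]
  by_cases hkl : k = Fin.last (N + 1)
  · subst hkl
    have hj' : j + 1 ≠ 0 := fun h =>
      hjk ((add_left_inj 1).mp (h.trans (Fin.last_add_one _).symm))
    rw [pivot_last]
    refine ⟨j + 1, hj', ?_⟩
    rwa [vertex_lower x π (ne_zero_of_not_isBoundaryFacet_last hnb) hj', add_sub_cancel_right]
  · rw [pivot_of_ne x π hk0 hkl]
    exact ⟨j, hjk, by rwa [vertex_adjSwap x π hk0 hkl hjk]⟩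

lemma not_isBoundaryFacet_pivot {e : KuhnSimplex m × Fin (N + 2)} (hnb : ¬ IsBoundaryFacet e) :
    ¬ IsBoundaryFacet (pivot e) := by
  obtain ⟨⟨x, π⟩, k⟩ := e
  by_cases hk0 : k = 0
  · subst hk0
    have hb := lt_of_not_isBoundaryFacet_zero hnb
    rw [pivot_zero]
    have hraise : ∀ i, i = π 0 → (raise x (π 0) i : ℕ) ≠ 0 := by
      rintro i rfl
      simp only [raise, update_self]
      omega
    rintro (⟨h, -⟩ | ⟨-, h⟩)
    · exact Fin.last_pos.ne' h
    · exact hraise _ (finRotate_trans_apply_last π) h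
  by_cases hkl : k = Fin.last (N + 1)
  · subst hkl
    have hb := ne_zero_of_not_isBoundaryFacet_last hnb
    have hlower : ∀ i, i = π (Fin.last N) → (lower x (π (Fin.last N)) i : ℕ) + 1 ≠ m i := by
      rintro _ rfl
      have := (x (π (Fin.last N))).2
      simp only [lower, update_self]
      omega
    rw [pivot_last]
    rintro (⟨-, h⟩ | ⟨h, -⟩)
    · exact hlower _ (finRotate_symm_trans_apply_zero π) h
    · exact Fin.last_pos.ne' h.symm
  · rw [pivot_of_ne x π hk0 hkl]
    rintro (⟨h, -⟩ | ⟨h, -⟩)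
    exacts [hk0 h, hkl h]

lemma pivot_pivot {e : KuhnSimplex m × Fin (N + 2)} (hnb : ¬ IsBoundaryFacet e) :
    pivot (pivot e) = e := by
  obtain ⟨⟨x, π⟩, k⟩ := e
  by_cases hk0 : k = 0
  · subst hk0
    rw [pivot_zero, pivot_last, finRotate_trans_apply_last,
      lower_raise x _ (lt_of_not_isBoundaryFacet_zero hnb), ← Equiv.trans_assoc,
      Equiv.symm_trans_self, Equiv.refl_trans]
  by_cases hkl : k = Fin.last (N + 1)
  · subst hkl
    rw [pivot_last, pivot_zero, finRotate_symm_trans_apply_zero,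
      raise_lower x _ (ne_zero_of_not_isBoundaryFacet_last hnb), ← Equiv.trans_assoc,
      Equiv.self_trans_symm, Equiv.refl_trans]
  · rw [pivot_of_ne x π hk0 hkl, pivot_of_ne x _ hk0 hkl, ← Equiv.trans_assoc, adjSwap,
      Equiv.swap_swap, Equiv.refl_trans]

lemma pivot_ne_self (e : KuhnSimplex m × Fin (N + 2)) : pivot e ≠ e := by
  obtain ⟨⟨x, π⟩, k⟩ := e
  by_cases hk0 : k = 0
  · subst hk0
    rw [pivot_zero]
    exact fun h => Fin.last_pos.ne' (congrArg Prod.snd h)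
  by_cases hkl : k = Fin.last (N + 1)
  · subst hkl
    rw [pivot_last]
    exact fun h => Fin.last_pos.ne' (congrArg Prod.snd h).symm
  · rw [pivot_of_ne x π hk0 hkl]
    intro h
    have hfix := π.injective (congrArg (fun e => e.1.2 ⟨k - 1, by omega⟩) h)
    have hk0' : (k : ℕ) ≠ 0 := fun h => hk0 (Fin.ext h)
    have hkl' := Fin.val_lt_last hkl
    simp only [adjSwap, Equiv.swap_apply_left, Fin.ext_iff] at hfix
    omega

end Pivot

section Boundary

variable {N : ℕ} {m : Fin (N + 1) → ℕ} {ℓ : (Fin (N + 1) → ℕ) → ℕ}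

theorem even_card_interior_doors :
    Even ((doors m ℓ).filter fun e => ¬ IsBoundaryFacet e).card := by
  refine Finset.even_card_of_involutive pivot (fun e he => ?_) (fun e he => ?_)
    (fun e _ => pivot_ne_self e)
  · rw [Finset.mem_filter, mem_doors] at he ⊢
    exact ⟨isDoor_pivot he.1 he.2, not_isBoundaryFacet_pivot he.2⟩
  · exact pivot_pivot (Finset.mem_filter.mp he).2

/-- The boundary doors are exactly the doors in the top face `p N = m N`. -/
lemma isBoundaryFacet_iff_of_isDoor (H1 : ∀ p (i : Fin (N + 1)), p i = 0 → ℓ p ≠ i)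
    (H2 : ∀ p (i : Fin (N + 1)), p i = m i → ℓ p ≤ i) {x : ∀ i, Fin (m i)}
    {π : Equiv.Perm (Fin (N + 1))} {k : Fin (N + 2)} (he : IsDoor ℓ (x, π) k) :
    IsBoundaryFacet ((x, π), k) ↔
      k = 0 ∧ π 0 = Fin.last N ∧ (x (Fin.last N) : ℕ) + 1 = m (Fin.last N) := by
  constructor
  · rintro (⟨rfl, hxm⟩ | ⟨rfl, hx0⟩)
    · obtain ⟨j, hj0, hjv⟩ := he N (by omega)
      have hj0' : (j : ℕ) ≠ 0 := fun h => hj0 (Fin.ext h)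
      have htop : vertex (x, π) j (π 0) = m (π 0) := by
        simp only [vertex, Equiv.symm_apply_apply, Fin.val_zero]
        rw [if_pos (by omega)]
        exact hxm
      have hπ0 : π 0 = Fin.last N := by
        have := H2 _ _ htop
        exact Fin.ext (by have := (π 0).2; simp only [Fin.val_last]; omega)
      exact ⟨rfl, hπ0, hπ0 ▸ hxm⟩
    · obtain ⟨j, hjl, hjv⟩ := he (π (Fin.last N)) (π (Fin.last N)).2
      have hbot : vertex (x, π) j (π (Fin.last N)) = 0 := by
        simp only [vertex, Equiv.symm_apply_apply, Fin.val_last]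
        rw [if_neg (by have := Fin.val_lt_last hjl; omega)]
        exact hx0
      exact absurd hjv (H1 _ _ hbot)
  · rintro ⟨rfl, hπ0, hxm⟩
    exact Or.inl ⟨rfl, hπ0 ▸ hxm⟩

def extendPerm (π' : Equiv.Perm (Fin N)) : Equiv.Perm (Fin (N + 1)) where
  toFun := Fin.cases (Fin.last N) fun j => (π' j).castSucc
  invFun := Fin.lastCases 0 fun i => (π'.symm i).succ
  left_inv j := by cases j using Fin.cases <;> simp
  right_inv i := by cases i using Fin.lastCases <;> simp

@[simp] lemma extendPerm_zero (π' : Equiv.Perm (Fin N)) : extendPerm π' 0 = Fin.last N := rfl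

@[simp] lemma extendPerm_succ (π' : Equiv.Perm (Fin N)) (j : Fin N) :
    extendPerm π' j.succ = (π' j).castSucc := rfl

lemma extendPerm_symm_last (π' : Equiv.Perm (Fin N)) : (extendPerm π').symm (Fin.last N) = 0 := by
  simp [extendPerm]

lemma extendPerm_symm_castSucc (π' : Equiv.Perm (Fin N)) (i : Fin N) :
    (extendPerm π').symm i.castSucc = (π'.symm i).succ := by
  simp [extendPerm]

lemma exists_extendPerm_eq {π : Equiv.Perm (Fin (N + 1))} (hπ : π 0 = Fin.last N) :
    ∃ π', extendPerm π' = π := by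
  have hne (j : Fin N) : π j.succ ≠ Fin.last N := fun h =>
    j.succ_ne_zero (π.injective (h.trans hπ.symm))
  refine ⟨⟨fun j => (π j.succ).castPred (hne j), fun i => (π.symm i.castSucc).pred fun h => ?_,
    fun j => by simp, fun i => by simp⟩, Equiv.ext fun j => ?_⟩
  · exact (Fin.castSucc_lt_last i).ne (by rw [← hπ, ← h, Equiv.apply_symm_apply])
  · cases j using Fin.cases <;> simp [hπ]

/-- The simplex of the top face `p N = m N`, raised to the top layer of cells of the box and
completed by its vertex `0` below that face. -/
def liftTop (hm : 0 < m (Fin.last N)) (s : KuhnSimplex fun i : Fin N => m i.castSucc) :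
    KuhnSimplex m :=
  (Fin.lastCases ⟨m (Fin.last N) - 1, by omega⟩ s.1, extendPerm s.2)

lemma vertex_liftTop_succ (hm : 0 < m (Fin.last N)) (s : KuhnSimplex fun i : Fin N => m i.castSucc)
    (j : Fin (N + 1)) :
    (liftTop hm s).vertex j.succ = Fin.snoc (s.vertex j) (m (Fin.last N)) := by
  funext i
  cases i using Fin.lastCases with
  | last =>
    simp only [vertex, liftTop, Fin.snoc_last, Fin.lastCases_last, extendPerm_symm_last,
      Fin.val_zero, Fin.val_succ]
    rw [if_pos (by omega)]
    omega
  | cast i =>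
    simp [vertex, liftTop, extendPerm_symm_castSucc]

lemma isDoor_liftTop_zero_iff (hm : 0 < m (Fin.last N))
    (s : KuhnSimplex fun i : Fin N => m i.castSucc) :
    IsDoor ℓ (liftTop hm s) 0 ↔ IsFullyLabelled (fun p => ℓ (Fin.snoc p (m (Fin.last N)))) s := by
  constructor
  · intro h v hv
    obtain ⟨j, hj0, hj⟩ := h v (Nat.lt_succ_of_le hv)
    obtain ⟨j, rfl⟩ := Fin.exists_succ_eq.mpr hj0
    exact ⟨j, by rwa [vertex_liftTop_succ] at hj⟩
  · intro h v hv
    obtain ⟨j, hj⟩ := h v (Nat.le_of_lt_succ hv)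
    exact ⟨j.succ, j.succ_ne_zero, by rwa [vertex_liftTop_succ]⟩

lemma liftTop_injective (hm : 0 < m (Fin.last N)) : Injective (liftTop (N := N) hm) := by
  intro s₁ s₂ h
  simp only [liftTop, Prod.mk.injEq] at h
  refine Prod.ext (funext fun i => ?_) (Equiv.ext fun j => Fin.castSucc_injective N ?_)
  · simpa using congrFun h.1 i.castSucc
  · simpa using congrArg (fun π => π j.succ) h.2

lemma exists_liftTop_eq (hm : 0 < m (Fin.last N)) {x : ∀ i, Fin (m i)}
    {π : Equiv.Perm (Fin (N + 1))} (hπ : π 0 = Fin.last N)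
    (hx : (x (Fin.last N) : ℕ) + 1 = m (Fin.last N)) :
    ∃ s, liftTop hm s = (x, π) := by
  obtain ⟨π', rfl⟩ := exists_extendPerm_eq hπ
  refine ⟨(fun i => x i.castSucc, π'), Prod.ext (funext fun i => ?_) rfl⟩
  cases i using Fin.lastCases with
  | last =>
    ext
    simp only [liftTop, Fin.lastCases_last]
    omega
  | cast i => simp [liftTop]

theorem card_fullyLabelled_top_face (hm : 0 < m (Fin.last N))
    (H1 : ∀ p (i : Fin (N + 1)), p i = 0 → ℓ p ≠ i)
    (H2 : ∀ p (i : Fin (N + 1)), p i = m i → ℓ p ≤ i) :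
    (fullyLabelled (fun i : Fin N => m i.castSucc) fun p => ℓ (Fin.snoc p (m (Fin.last N)))).card =
      ((doors m ℓ).filter IsBoundaryFacet).card := by
  refine Finset.card_nbij (fun s => (liftTop hm s, 0)) (fun s hs => ?_)
    (fun s₁ _ s₂ _ h => liftTop_injective hm (congrArg Prod.fst h)) (fun e he => ?_)
  · rw [Finset.mem_coe, mem_fullyLabelled] at hs
    rw [Finset.mem_coe, Finset.mem_filter, mem_doors]
    refine ⟨(isDoor_liftTop_zero_iff hm s).mpr hs, Or.inl ⟨rfl, ?_⟩⟩
    simp only [liftTop, extendPerm_zero, Fin.lastCases_last]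
    omega
  · obtain ⟨⟨x, π⟩, k⟩ := e
    rw [Finset.mem_coe, Finset.mem_filter, mem_doors] at he
    obtain ⟨rfl, hπ, hx⟩ := (isBoundaryFacet_iff_of_isDoor H1 H2 he.1).mp he.2
    obtain ⟨s, hs⟩ := exists_liftTop_eq hm hπ hx
    refine ⟨s, ?_, congrArg (·, 0) hs⟩
    rw [Finset.mem_coe, mem_fullyLabelled, ← isDoor_liftTop_zero_iff hm, hs]
    exact he.1

end Boundary

/-- Sperner's lemma for Kuhn's triangulation of a box. -/
theorem odd_card_fullyLabelled {n : ℕ} {m : Fin n → ℕ} (hm : ∀ i, 0 < m i)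
    {ℓ : (Fin n → ℕ) → ℕ} (hℓ : ∀ p, ℓ p ≤ n) (H1 : ∀ p (i : Fin n), p i = 0 → ℓ p ≠ i)
    (H2 : ∀ p (i : Fin n), p i = m i → ℓ p ≤ i) : Odd (fullyLabelled m ℓ).card := by
  induction n with
  | zero =>
    have hall : fullyLabelled m ℓ = Finset.univ :=
      Finset.eq_univ_of_forall fun s => mem_fullyLabelled.mpr fun v hv => ⟨0, by
        have := hℓ (s.vertex 0); omega⟩
    simp [hall]
  | succ N ih =>
    have hface := ih (m := fun i => m i.castSucc) (ℓ := fun p => ℓ (Fin.snoc p (m (Fin.last N))))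
      (fun i => hm _) (fun p => by simpa using H2 _ (Fin.last N) (Fin.snoc_last _ _))
      (fun p i hpi => by simpa using H1 _ i.castSucc (by simpa using hpi))
      (fun p i hpi => by simpa using H2 _ i.castSucc (by simpa using hpi))
    rw [card_fullyLabelled_top_face (hm _) H1 H2] at hface
    have hdoors := card_doors_mod_two (m := m) hℓ
    have hsplit := Finset.card_filter_add_card_filter_not (s := doors m ℓ) (p := IsBoundaryFacet)
    obtain ⟨c, hc⟩ := even_card_interior_doors (m := m) (ℓ := ℓ)
    rw [Nat.odd_iff] at hface ⊢
    rw [hc] at hsplit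
    omega

/-- A discrete Poincaré–Miranda theorem. -/
theorem exists_forall_exists_and_exists_forall_not {n : ℕ} {m : Fin n → ℕ} (hm : ∀ i, 0 < m i)
    (H : (Fin n → ℕ) → Fin n → Prop) (h0 : ∀ p i, p i = 0 → ¬ H p i)
    (h1 : ∀ p i, p i = m i → H p i) :
    ∃ s : KuhnSimplex m, (∀ i, ∃ j, H (s.vertex j) i) ∧ ∃ j, ∀ i, ¬ H (s.vertex j) i := by
  let ℓ p := firstIndex (H p)
  have hodd := odd_card_fullyLabelled hm (ℓ := ℓ) (fun p => firstIndex_le)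
    (fun p i hp hℓ => h0 p i hp (of_firstIndex_eq hℓ)) (fun p i hp => firstIndex_le_of (h1 p i hp))
  obtain ⟨s, hs⟩ := Finset.card_pos.mp hodd.pos
  have hs := mem_fullyLabelled.mp hs
  refine ⟨s, fun i => (hs i i.2.le).imp fun j => of_firstIndex_eq, ?_⟩
  obtain ⟨j, hj : firstIndex (H (s.vertex j)) = n⟩ := hs n le_rfl
  exact ⟨j, fun i hi => absurd (firstIndex_le_of hi) (by omega)⟩

lemma dist_vertex_lt {n : ℕ} {T : Fin n → Type*} [∀ i, PseudoMetricSpace (T i)]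
    {M : Fin n → ℕ} {c : ∀ i, ℕ → T i} {δ : ℝ} (hδ : 0 < δ)
    (hc : ∀ i, ∀ k < M i, dist (c i k) (c i (k + 1)) < δ) (s : KuhnSimplex M) (j : Fin (n + 1)) :
    dist (fun i => c i (s.vertex j i)) (fun i => c i (s.1 i)) < δ := by
  refine (dist_pi_lt_iff hδ).mpr fun i => ?_
  simp only [vertex]
  split_ifs
  · rw [dist_comm]
    exact hc i _ (s.1 i).2
  · simpa using hδ

end KuhnSimplex

section Holsztynski

variable {n : ℕ} {T : Fin n → Type*} [∀ i, PseudoMetricSpace (T i)] [∀ i, PreconnectedSpace (T i)]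

theorem mem_closure_range_of_eqOn_boundary (u : ∀ i, T i → unitInterval)
    (hs : ∀ i, Surjective (u i)) {g : (∀ i, T i) → (Fin n → unitInterval)}
    (hg : UniformContinuous g)
    (hbd : ∀ t : ∀ i, T i, (fun i => u i (t i)) ∈ cubeBoundary n → g t = fun i => u i (t i))
    {y : Fin n → unitInterval} (hy : ∀ i, y i ≠ 1) : y ∈ closure (range g) := by
  refine Metric.mem_closure_iff.mpr fun η hη => ?_
  obtain ⟨δ, hδ, hgδ⟩ := Metric.uniformContinuous_iff.mp hg (η / 2) (half_pos hη)
  choose a ha using fun i => hs i 0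
  choose b hb using fun i => hs i 1
  choose M c hc0 hcM hc using fun i => exists_chain_dist_lt (a i) (b i) hδ
  have hM (i) : 0 < M i := Nat.pos_of_ne_zero fun h => zero_ne_one (α := unitInterval) <| by
    rw [← ha i, ← hb i, ← hc0 i, ← hcM i, h]
  let Φ (p : Fin n → ℕ) : ∀ i, T i := fun i => c i (p i)
  have hgΦ (p i) (hp : u i (Φ p i) = 0 ∨ u i (Φ p i) = 1) : g (Φ p) i = u i (Φ p i) :=
    congrFun (hbd (Φ p) ⟨i, hp⟩) i
  obtain ⟨s, hup, j₀, hlow⟩ := KuhnSimplex.exists_forall_exists_and_exists_forall_not hM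
    (fun p i => y i < g (Φ p) i)
    (fun p i hp => by
      have hu : u i (Φ p i) = 0 := by simp only [Φ, hp, hc0, ha]
      simp [hgΦ p i (Or.inl hu), hu])
    (fun p i hp => by
      have hu : u i (Φ p i) = 1 := by simp only [Φ, hp, hcM, hb]
      simpa [hgΦ p i (Or.inr hu), hu] using lt_of_le_of_ne unitInterval.le_one' (hy i))
  have hnear (j) : dist (g (Φ (s.vertex j))) (g fun i => c i (s.1 i)) < η / 2 :=
    hgδ (KuhnSimplex.dist_vertex_lt hδ hc s j)
  refine ⟨g (Φ (s.vertex j₀)), mem_range_self _, (dist_pi_lt_iff hη).mpr fun i => ?_⟩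
  obtain ⟨j, hj⟩ := hup i
  have hji : dist (g (Φ (s.vertex j)) i) (g (Φ (s.vertex j₀)) i) < η :=
    (dist_le_pi_dist _ _ i).trans_lt <| (dist_triangle_right _ _ _).trans_lt <| by
      linarith [hnear j, hnear j₀]
  rw [Subtype.dist_eq, Real.dist_eq, abs_lt] at hji ⊢
  have hj' : (y i : ℝ) < g (Φ (s.vertex j)) i := hj
  have hj₀ : (g (Φ (s.vertex j₀)) i : ℝ) ≤ y i := not_lt.mp (hlow i)
  constructor <;> linarith [hji.1, hji.2]

end Holsztynski

theorem stmt_3_general {n : ℕ} (T : Fin n → Type*)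
    [∀ i, MetricSpace (T i)] [∀ i, CompactSpace (T i)]
    [∀ i, ConnectedSpace (T i)]
    (u : ∀ i, T i → unitInterval)
    (hs : ∀ i, Surjective (u i)) :
    ∀ g : (∀ i, T i) → (Fin n → unitInterval), Continuous g →
      (∀ t : ∀ i, T i, (fun i => u i (t i)) ∈ cubeBoundary n → g t = fun i => u i (t i)) →
      Surjective g := by
  intro g hg hbd y
  by_cases hy : ∃ i, y i = 1
  · choose t ht using fun i => hs i (y i)
    have hut : (fun i => u i (t i)) = y := funext ht
    obtain ⟨i, hi⟩ := hy
    exact ⟨t, (hbd t (hut ▸ ⟨i, Or.inr hi⟩)).trans hut⟩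
  · push Not at hy
    rw [← mem_range, ← (isCompact_range hg).isClosed.closure_eq]
    exact mem_closure_range_of_eqOn_boundary u hs
      (CompactSpace.uniformContinuous_of_continuous hg) hbd hy

/-- Holsztyński: if `T₁, …, Tₙ` are metrizable continua and
`uᵢ : Tᵢ → [0,1]` are continuous surjections, then the product map
`u₁ × ⋯ × uₙ` is essential: every continuous map into the cube agreeing with it
on the preimage of the boundary is surjective. -/
theorem stmt_3 {n : ℕ} (T : Fin n → Type*)
    [∀ i, MetricSpace (T i)] [∀ i, CompactSpace (T i)]
    [∀ i, ConnectedSpace (T i)] [∀ i, Nonempty (T i)]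
    (u : ∀ i, T i → unitInterval)
    (hc : ∀ i, Continuous (u i)) (hs : ∀ i, Surjective (u i)) :
    ∀ g : (∀ i, T i) → (Fin n → unitInterval), Continuous g →
      (∀ t : ∀ i, T i, (fun i => u i (t i)) ∈ cubeBoundary n → g t = fun i => u i (t i)) →
      Surjective g :=
  stmt_3_general T u hs
end

section
/- If X and Y are compact metrizable spaces of positive dimension and there exists an embedding h : X × Y → X, then for every nontrivial continuum K such that Y contains topological copies of K of arbitrarily small diameter, the countable product K^ℕ embeds into X. -/
open Set Function Topology

/-!
Fix a point `y₀ ∈ Y` near which `Y` contains arbitrarily small copies of `K`, and a backward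
orbit `(xₙ)` of `h(·, y₀)`. Choosing copies `eᵢ : K → Y` close to `y₀`, the maps
`k ↦ h(⋯ h(xₙ, eₙ₋₁(kₙ₋₁)) ⋯, e₀(k₀))` on `K^ℕ` form a uniformly Cauchy sequence, provided each
`eᵢ` is close enough to `y₀` for the uniform continuity of the previous stage. The limit is
continuous; it is injective because `h` and the `eᵢ` are injective and every stage has compact
range, which traps the limit. A continuous injection of the compact space `K^ℕ` is an embedding.
-/

open Filter Metric

theorem ContinuousMap.uniform_continuity_fst {A Z X : Type*} [PseudoMetricSpace A] [CompactSpace A]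
    [TopologicalSpace Z] [CompactSpace Z] [PseudoMetricSpace X] (Φ : C(A × Z, X))
    {ε : ℝ} (hε : 0 < ε) :
    ∃ δ > 0, ∀ {a b : A}, dist a b < δ → ∀ z, dist (Φ (a, z)) (Φ (b, z)) < ε := by
  obtain ⟨δ, hδ, hΦ⟩ := Φ.curry.uniform_continuity ε hε
  exact ⟨δ, hδ, fun hab z => (ContinuousMap.dist_apply_le_dist z).trans_lt (hΦ hab)⟩

theorem exists_forall_exists_subset_ball {Y ι : Type*} [PseudoMetricSpace Y] [CompactSpace Y]
    {s : ι → Set Y} (hne : ∀ i, (s i).Nonempty) (hsmall : ∀ ε > 0, ∃ i, diam (s i) < ε) :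
    ∃ y, ∀ η > 0, ∃ i, s i ⊆ ball y η := by
  choose i hi using fun n : ℕ => hsmall (1 / (n + 1)) Nat.one_div_pos_of_nat
  choose p hp using fun n => hne (i n)
  obtain ⟨y, -, hy⟩ := isCompact_univ.exists_mapClusterPt (f := atTop) (u := p) (by simp)
  refine ⟨y, fun η hη => ?_⟩
  have hclose : ∃ᶠ n in atTop, dist (p n) y < η / 2 :=
    hy.frequently (ball_mem_nhds y (by positivity))
  have hdiam : ∀ᶠ n : ℕ in atTop, diam (s (i n)) < η / 2 :=
    (tendsto_one_div_add_atTop_nhds_zero_nat.eventually (gt_mem_nhds (by positivity))).mono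
      fun n hn => (hi n).trans hn
  obtain ⟨n, hpn, hsn⟩ := (hclose.and_eventually hdiam).exists
  refine ⟨i n, fun w hw => ?_⟩
  calc dist w y ≤ dist w (p n) + dist (p n) y := dist_triangle _ _ _
    _ < η / 2 + η / 2 := by
      gcongr
      exact (dist_le_diam_of_mem isBounded_of_compactSpace hw (hp n)).trans_lt hsn
    _ = η := add_halves η

theorem exists_backward_orbit {X : Type*} [TopologicalSpace X] [CompactSpace X] [T2Space X]
    [Nonempty X] {f : X → X} (hf : Continuous f) : ∃ x : ℕ → X, ∀ n, f (x (n + 1)) = x n := by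
  let T : ℕ → Set (ℕ → X) := fun n => ⋂ i < n, {x | f (x (i + 1)) = x i}
  have hT_closed : ∀ n, IsClosed (T n) := fun n =>
    isClosed_biInter fun i _ => isClosed_eq (hf.comp (continuous_apply _)) (continuous_apply i)
  have hT_nonempty : ∀ n, (T n).Nonempty := by
    intro n
    obtain ⟨z⟩ := ‹Nonempty X›
    refine ⟨fun i => f^[n - i] z, mem_iInter₂.2 fun i hi => ?_⟩
    simp only [mem_ofPred_eq, ← iterate_succ_apply' f]
    congr 1
    omega
  obtain ⟨x, hx⟩ := IsCompact.nonempty_iInter_of_sequence_nonempty_isCompact_isClosed T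
    (fun n => biInter_subset_biInter_left fun i hi => Nat.lt_succ_of_lt hi) hT_nonempty
    (hT_closed 0).isCompact hT_closed
  exact ⟨x, fun n => mem_iInter₂.1 (mem_iInter.1 hx (n + 1)) n n.lt_succ_self⟩

theorem exists_perturbation_dist_lt {X Y K : Type*} [MetricSpace X] [CompactSpace X]
    [MetricSpace Y] [CompactSpace Y] [TopologicalSpace K] [CompactSpace K] (h : C(X × Y, X))
    {y₀ : Y} (hsmall : ∀ η > 0, ∃ e : C(K, Y), Injective e ∧ range e ⊆ ball y₀ η)
    (Φ : C(X × (ℕ → K), X)) (n : ℕ) {ε : ℝ} (hε : 0 < ε) :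
    ∃ e : C(K, Y), Injective e ∧ ∀ x k, dist (Φ (h (x, e (k n)), k)) (Φ (h (x, y₀), k)) < ε := by
  obtain ⟨δ, hδ, hΦ⟩ := Φ.uniform_continuity_fst hε
  obtain ⟨η, hη, hh⟩ := (h.comp .prodSwap).uniform_continuity_fst hδ
  obtain ⟨e, he, he_ball⟩ := hsmall η hη
  exact ⟨e, he, fun x k => hΦ (hh (he_ball (mem_range_self (k n))) x) k⟩

section Stages

variable {X Y K : Type*} [TopologicalSpace X] [TopologicalSpace Y] [TopologicalSpace K]

/-- `stageMap next h n (x, k) = h (⋯ h (h (x, eₙ₋₁ (k (n-1))), eₙ₋₂ (k (n-2))) ⋯, e₀ (k 0))`,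
where each `eᵢ = next (stageMap next h i) i` may depend on the stage already built. -/
noncomputable def stageMap (next : C(X × (ℕ → K), X) → ℕ → C(K, Y)) (h : C(X × Y, X)) :
    ℕ → C(X × (ℕ → K), X)
  | 0 => .fst
  | n + 1 =>
    let e := next (stageMap next h n) n
    (stageMap next h n).comp ⟨fun p => (h (p.1, e (p.2 n)), p.2), by fun_prop⟩

variable (next : C(X × (ℕ → K), X) → ℕ → C(K, Y)) (h : C(X × Y, X))

theorem stageMap_succ_apply (n : ℕ) (x : X) (k : ℕ → K) :
    stageMap next h (n + 1) (x, k) =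
      stageMap next h n (h (x, next (stageMap next h n) n (k n)), k) :=
  rfl

theorem exists_stageMap_eq_of_le {m n : ℕ} (hmn : m ≤ n) (x : X) (k : ℕ → K) :
    ∃ z, stageMap next h n (x, k) = stageMap next h m (z, k) := by
  induction n, hmn using Nat.le_induction generalizing x with
  | base => exact ⟨x, rfl⟩
  | succ n _ ih => exact ih _

theorem eq_and_forall_lt_of_stageMap_eq (hh : Injective h) (hnext : ∀ Φ n, Injective (next Φ n))
    (n : ℕ) {x x' : X} {k k' : ℕ → K}
    (heq : stageMap next h n (x, k) = stageMap next h n (x', k')) :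
    x = x' ∧ ∀ i < n, k i = k' i := by
  induction n generalizing x x' with
  | zero => exact ⟨heq, fun i hi => absurd hi i.not_lt_zero⟩
  | succ n ih =>
    obtain ⟨hx, hk⟩ := ih heq
    obtain ⟨rfl, hkn⟩ := Prod.ext_iff.1 (hh hx)
    refine ⟨rfl, fun i hi => ?_⟩
    rcases Nat.lt_succ_iff_lt_or_eq.1 hi with hi | rfl
    · exact hk i hi
    · exact hnext _ _ hkn

end Stages

theorem exists_continuous_injective_of_stages {X P : Type*} [MetricSpace X] [CompactSpace X]
    [TopologicalSpace P] [CompactSpace P] (Φ : ℕ → C(X × P, X)) (x : ℕ → X)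
    (hdist : ∀ n p, dist (Φ n (x n, p)) (Φ (n + 1) (x (n + 1), p)) ≤ 1 / 2 ^ n)
    (hnest : ∀ m n, m ≤ n → ∀ z p, ∃ z', Φ n (z, p) = Φ m (z', p))
    (hsep : ∀ p q, p ≠ q → ∃ m, ∀ z z', Φ m (z, p) ≠ Φ m (z', q)) :
    ∃ ψ : P → X, Continuous ψ ∧ Injective ψ := by
  let ψ : ℕ → C(P, X) := fun n => (Φ n).curry (x n)
  have hcauchy : CauchySeq ψ := cauchySeq_of_le_geometric_two (C := 2) fun n =>
    (ContinuousMap.dist_le (by positivity)).2 fun p => by simpa [ψ] using hdist n p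
  obtain ⟨ψ_lim, hψ⟩ := cauchySeq_tendsto_of_complete hcauchy
  have hmem : ∀ m p, ψ_lim p ∈ range fun z => Φ m (z, p) := by
    intro m p
    refine (isCompact_range (by fun_prop)).isClosed.mem_of_tendsto
      (((continuous_eval_const p).tendsto ψ_lim).comp hψ) ?_
    filter_upwards [eventually_ge_atTop m] with n hn
    obtain ⟨z, hz⟩ := hnest m n hn (x n) p
    exact ⟨z, hz.symm⟩
  refine ⟨ψ_lim, ψ_lim.continuous, fun p q hpq => by_contra fun hne => ?_⟩
  obtain ⟨m, hm⟩ := hsep p q hne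
  obtain ⟨z, hz⟩ := hmem m p
  obtain ⟨z', hz'⟩ := hmem m q
  exact hm z z' (hz.trans (hpq.trans hz'.symm))

theorem exists_continuous_injective_pi_of_forall_subset_ball {X Y K : Type*} [MetricSpace X]
    [CompactSpace X] [Nonempty X] [MetricSpace Y] [CompactSpace Y] [TopologicalSpace K]
    [CompactSpace K] (h : C(X × Y, X)) (hh : Injective h) {y₀ : Y}
    (hsmall : ∀ η > 0, ∃ e : C(K, Y), Injective e ∧ range e ⊆ ball y₀ η) :
    ∃ ψ : (ℕ → K) → X, Continuous ψ ∧ Injective ψ := by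
  choose next hnext_inj hnext_dist using fun Φ n =>
    exists_perturbation_dist_lt h hsmall Φ n (ε := 1 / 2 ^ n) (by positivity)
  obtain ⟨x, hx⟩ := exists_backward_orbit (f := fun z => h (z, y₀)) (by fun_prop)
  refine exists_continuous_injective_of_stages (stageMap next h) x (fun n k => ?_)
    (fun m n hmn => exists_stageMap_eq_of_le next h hmn) (fun k k' hk => ?_)
  · rw [dist_comm, stageMap_succ_apply, ← hx n]
    exact (hnext_dist _ n _ k).le
  · obtain ⟨m, hm⟩ := Function.ne_iff.1 hk
    exact ⟨m + 1, fun z z' heq =>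
      hm ((eq_and_forall_lt_of_stageMap_eq next h hh hnext_inj _ heq).2 m m.lt_succ_self)⟩

theorem stmt_14_general {X Y : Type*} [MetricSpace X] [CompactSpace X]
    [MetricSpace Y] [CompactSpace Y]
    (hX : ¬ ZeroDimSpace X)
    (h : X × Y → X) (hemb : IsEmbedding h)
    (K : Type*) [MetricSpace K] [CompactSpace K] [Nontrivial K]
    (hcopies : ∀ ε : ℝ, 0 < ε → ∃ e : K → Y, IsEmbedding e ∧
      Metric.diam (Set.range e) < ε) :
    ∃ e : (ℕ → K) → X, IsEmbedding e := by
  have : Nonempty X := not_isEmpty_iff.1 fun _ => hX fun x => isEmptyElim x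
  choose e he_emb he_diam using hcopies
  obtain ⟨y₀, hy₀⟩ := exists_forall_exists_subset_ball
    (s := fun ε : {ε : ℝ // 0 < ε} => range (e ε ε.2)) (fun _ => range_nonempty _)
    fun ε hε => ⟨⟨ε, hε⟩, he_diam ε hε⟩
  obtain ⟨ψ, hψ_cont, hψ_inj⟩ := exists_continuous_injective_pi_of_forall_subset_ball
    ⟨h, hemb.continuous⟩ hemb.injective fun η hη => by
      obtain ⟨⟨ε, hε⟩, hsub⟩ := hy₀ η hη
      exact ⟨⟨e ε hε, (he_emb ε hε).continuous⟩, (he_emb ε hε).injective, hsub⟩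
  exact ⟨ψ, (hψ_cont.isClosedEmbedding hψ_inj).isEmbedding⟩

/-- if `X`, `Y` are compacta of positive dimension, `h : X × Y → X`
is an embedding, and `K` is a nontrivial continuum admitting topological copies in
`Y` of arbitrarily small diameter, then `K^ℕ` embeds into `X`. -/
theorem stmt_14 {X Y : Type*} [MetricSpace X] [CompactSpace X]
    [MetricSpace Y] [CompactSpace Y]
    (hX : ¬ ZeroDimSpace X) (hY : ¬ ZeroDimSpace Y)
    (h : X × Y → X) (hemb : IsEmbedding h)
    (K : Type*) [MetricSpace K] [CompactSpace K] [ConnectedSpace K] [Nontrivial K]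
    (hcopies : ∀ ε : ℝ, 0 < ε → ∃ e : K → Y, IsEmbedding e ∧
      Metric.diam (Set.range e) < ε) :
    ∃ e : (ℕ → K) → X, IsEmbedding e :=
  stmt_14_general hX h hemb K hcopies
end
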